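/- Let λ_1, λ_2 ∈ (0,1/2) and let K_1, K_2 be nonempty compact subsets of ℝ² satisfying K_i = F_{1,λ_i}(K_i) ∪ F_{2,λ_i}(K_i) ∪ F_{3,λ_i}(K_i) ∪ F_{4,λ_i}(K_i) for i = 1,2 (so that K_i = AG_{λ_i} is the attractor of the corresponding iterated function system). Then δ(K_1, K_2) ≤ 2|λ_1 − λ_2|, where δ denotes the Hausdorff distance on nonempty compact subsets of ℝ². -/

import Mathlib

open Filter Topology

noncomputable section

/-- The Euclidean plane. -/
abbrev E2 : Type := EuclideanSpace ℝ (Fin 2)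

/-- The point of the Euclidean plane with coordinates `(a, b)`. -/
def e2 (a b : ℝ) : E2 := (WithLp.equiv 2 (Fin 2 → ℝ)).symm ![a, b]

/-- The vertices `p₁ = (1/2, √3/2)`, `p₂ = (0,0)`, `p₃ = (1,0)` of the
equilateral triangle (indexed by `0, 1, 2`). -/
def pt : Fin 3 → E2 :=
  ![e2 (1 / 2) (Real.sqrt 3 / 2), e2 0 0, e2 1 0]

/-- The map `F_{4,λ}`: the orientation-preserving similarity of the plane
sending `p₁, p₂, p₃` to `(1/4+λ, √3/4)`, `(1/2−λ/2, √3 λ/2)`,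
`(3/4−λ/2, √3/4−√3 λ/2)` respectively; in complex coordinates it is
`z ↦ a z + b` with `a = 1/4 + i √3 (1/4 − λ)`, `b = (1/2 − λ/2) + i √3 λ/2`. -/
def F4 (lam : ℝ) (x : E2) : E2 :=
  e2 ((1 / 4) * x 0 - Real.sqrt 3 * (1 / 4 - lam) * x 1 + (1 / 2 - lam / 2))
     (Real.sqrt 3 * (1 / 4 - lam) * x 0 + (1 / 4) * x 1 + Real.sqrt 3 * lam / 2)

/-- The four maps of the iterated function system of `AG_λ`:
`F_{i,λ}(x) = (x + p_i)/2` for `i = 0,1,2` and `F_{3,λ} = F_{4,λ}`. -/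
def Fmap (lam : ℝ) : Fin 4 → E2 → E2 :=
  ![fun x => (2⁻¹ : ℝ) • (x + pt 0),
    fun x => (2⁻¹ : ℝ) • (x + pt 1),
    fun x => (2⁻¹ : ℝ) • (x + pt 2),
    F4 lam]

/-- Rotation by `2π/3` about the centroid `(1/2, √3/6)` of the triangle;
it generates the symmetry group `G` (of order 3) of rotations acting as `A₃`
on `{p₁, p₂, p₃}`. -/
def rot3 (x : E2) : E2 :=
  e2 (-(1 / 2) * (x 0 - 1 / 2) - (Real.sqrt 3 / 2) * (x 1 - Real.sqrt 3 / 6) + 1 / 2)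
     ((Real.sqrt 3 / 2) * (x 0 - 1 / 2) - (1 / 2) * (x 1 - Real.sqrt 3 / 6) + Real.sqrt 3 / 6)

/-- The closed triangle `▲` with vertices `p₁, p₂, p₃`. -/
def Tri : Set E2 := convexHull ℝ {pt 0, pt 1, pt 2}

/-- `K` is the attractor `AG_λ` of the iterated function system `{F_{i,λ}}`,
i.e. the unique nonempty compact set with `K = ⋃ᵢ F_{i,λ}(K)`. -/
def IsAG (lam : ℝ) (K : Set E2) : Prop :=
  K.Nonempty ∧ IsCompact K ∧ K = ⋃ i : Fin 4, Fmap lam i '' K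

end

section Aux
local notation "s3" => Real.sqrt 3

lemma hs3 : s3 * s3 = 3 := Real.mul_self_sqrt (by norm_num)
lemma hs3' : (0:ℝ) ≤ s3 := Real.sqrt_nonneg 3

lemma e2_zero (a b : ℝ) : e2 a b 0 = a := rfl
lemma e2_one (a b : ℝ) : e2 a b 1 = b := rfl

lemma E2ext {x y : E2} (h0 : x 0 = y 0) (h1 : x 1 = y 1) : x = y := by
  refine PiLp.ext fun i => ?_; fin_cases i <;> assumption

lemma dist_E2 (x y : E2) : dist x y = Real.sqrt ((x 0 - y 0)^2 + (x 1 - y 1)^2) := by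
  rw [EuclideanSpace.dist_eq, Fin.sum_univ_two]
  simp [Real.dist_eq, sq_abs]

lemma pt0_zero : pt 0 0 = 1/2 := rfl
lemma pt0_one : pt 0 1 = s3/2 := rfl
lemma pt1_zero : pt 1 0 = 0 := rfl
lemma pt1_one : pt 1 1 = 0 := rfl
lemma pt2_zero : pt 2 0 = 1 := rfl
lemma pt2_one : pt 2 1 = 0 := rfl

lemma smul_apply' (r : ℝ) (x : E2) (i : Fin 2) : (r • x) i = r * x i := rfl
lemma add_apply' (x y : E2) (i : Fin 2) : (x + y) i = x i + y i := rfl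

lemma convex_Tri : Convex ℝ Tri := convex_convexHull ℝ _

lemma combo_mem' {q : Fin 3 → E2} (hq : ∀ i, q i ∈ Tri) {a b c : ℝ}
    (ha : 0 ≤ a) (hb : 0 ≤ b) (hc : 0 ≤ c) (habc : a + b + c = 1) :
    a • q 0 + b • q 1 + c • q 2 ∈ Tri := by
  have := convex_Tri.sum_mem (t := Finset.univ) (w := ![a,b,c]) (z := q)
    (by intro i _; fin_cases i <;> assumption)
    (by simp [Fin.sum_univ_three]; linarith)
    (by intro i _; exact hq i)
  simpa [Fin.sum_univ_three] using this

lemma pt_mem_Tri (i : Fin 3) : pt i ∈ Tri := by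
  apply subset_convexHull
  fin_cases i <;> simp

lemma combo_mem {a b c : ℝ} (ha : 0 ≤ a) (hb : 0 ≤ b) (hc : 0 ≤ c)
    (habc : a + b + c = 1) : a • pt 0 + b • pt 1 + c • pt 2 ∈ Tri :=
  combo_mem' pt_mem_Tri ha hb hc habc

end Aux

section Aux2
local notation "s3" => Real.sqrt 3

lemma Tri_ineqs {x : E2} (hx : x ∈ Tri) :
    0 ≤ x 1 ∧ x 1 ≤ s3 * x 0 ∧ s3 * x 0 + x 1 ≤ s3 := by
  have lin1 : IsLinearMap ℝ (fun z : E2 => z 1) := ⟨fun a b => rfl, fun c a => rfl⟩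
  have lin2 : IsLinearMap ℝ (fun z : E2 => s3 * z 0 - z 1) :=
    ⟨fun a b => by simp [add_apply']; ring, fun c a => by simp [smul_apply']; ring⟩
  have lin3 : IsLinearMap ℝ (fun z : E2 => s3 * z 0 + z 1) :=
    ⟨fun a b => by simp [add_apply']; ring, fun c a => by simp [smul_apply']; ring⟩
  have h1 : Tri ⊆ {z : E2 | 0 ≤ z 1} := by
    apply convexHull_min _ (convex_halfSpace_ge lin1 0)
    intro z hz
    rcases hz with h | h | h <;> subst h <;>
      simp [Set.mem_setOf_eq, pt0_one, pt1_one, pt2_one, Real.sqrt_nonneg]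
    · exact div_nonneg hs3' (by norm_num)
  have h2 : Tri ⊆ {z : E2 | 0 ≤ s3 * z 0 - z 1} := by
    apply convexHull_min _ (convex_halfSpace_ge lin2 0)
    intro z hz
    rcases hz with h | h | h <;> subst h <;>
      simp [Set.mem_setOf_eq, pt0_zero, pt0_one, pt1_zero, pt1_one, pt2_zero, pt2_one] <;>
      nlinarith [hs3, hs3']
  have h3 : Tri ⊆ {z : E2 | s3 * z 0 + z 1 ≤ s3} := by
    apply convexHull_min _ (convex_halfSpace_le lin3 s3)
    intro z hz
    rcases hz with h | h | h <;> subst h <;>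
      simp [Set.mem_setOf_eq, pt0_zero, pt0_one, pt1_zero, pt1_one, pt2_zero, pt2_one] <;>
      nlinarith [hs3, hs3']
  refine ⟨h1 hx, ?_, h3 hx⟩
  have := h2 hx
  simp only [Set.mem_setOf_eq] at this
  linarith

lemma exists_bary {x : E2} (hx : x ∈ Tri) :
    ∃ a b c : ℝ, 0 ≤ a ∧ 0 ≤ b ∧ 0 ≤ c ∧ a + b + c = 1 ∧
      x = a • pt 0 + b • pt 1 + c • pt 2 := by
  obtain ⟨h1, h2, h3⟩ := Tri_ineqs hx
  have key3 : 3 * x 0 + s3 * x 1 ≤ 3 := by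
    have h := mul_le_mul_of_nonneg_left h3 hs3'
    calc 3 * x 0 + s3 * x 1 = s3 * (s3 * x 0 + x 1) := by linear_combination (-(x 0)) * hs3
      _ ≤ s3 * s3 := h
      _ = 3 := hs3
  have key2 : s3 * x 1 ≤ 3 * x 0 := by
    have h := mul_le_mul_of_nonneg_left h2 hs3'
    calc s3 * x 1 ≤ s3 * (s3 * x 0) := h
      _ = 3 * x 0 := by linear_combination (x 0) * hs3
  refine ⟨2 * s3 * x 1 / 3, 1 - x 0 - s3 * x 1 / 3, x 0 - s3 * x 1 / 3,
    by positivity, by linarith, by linarith, by ring, ?_⟩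
  apply E2ext <;>
    simp [add_apply', smul_apply', pt0_zero, pt0_one, pt1_zero, pt1_one, pt2_zero, pt2_one] <;>
    nlinarith [hs3]
end Aux2

section Aux3
local notation "s3" => Real.sqrt 3

lemma F4_zero (lam : ℝ) (x : E2) :
    F4 lam x 0 = (1/4) * x 0 - s3 * (1/4 - lam) * x 1 + (1/2 - lam/2) := rfl
lemma F4_one (lam : ℝ) (x : E2) :
    F4 lam x 1 = s3 * (1/4 - lam) * x 0 + (1/4) * x 1 + s3 * lam / 2 := rfl

lemma F4_combo (lam a b c : ℝ) (h : a + b + c = 1) :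
    F4 lam (a • pt 0 + b • pt 1 + c • pt 2)
      = a • F4 lam (pt 0) + b • F4 lam (pt 1) + c • F4 lam (pt 2) := by
  refine E2ext ?_ ?_ <;>
    simp only [add_apply', smul_apply', F4_zero, F4_one,
      pt0_zero, pt0_one, pt1_zero, pt1_one, pt2_zero, pt2_one]
  · linear_combination (-(1/2 - lam/2)) * h
  · linear_combination (-(s3 * lam / 2)) * h

lemma F4_pt0 (lam : ℝ) :
    F4 lam (pt 0) = (1/2 : ℝ) • pt 0 + (1/2 - lam) • pt 1 + lam • pt 2 := by
  refine E2ext ?_ ?_ <;>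
    simp only [add_apply', smul_apply', F4_zero, F4_one,
      pt0_zero, pt0_one, pt1_zero, pt1_one, pt2_zero, pt2_one]
  · linear_combination (-(1/4 - lam)/2) * hs3
  · ring

lemma F4_pt1 (lam : ℝ) :
    F4 lam (pt 1) = lam • pt 0 + (1/2 : ℝ) • pt 1 + (1/2 - lam) • pt 2 := by
  refine E2ext ?_ ?_ <;>
    simp only [add_apply', smul_apply', F4_zero, F4_one,
      pt0_zero, pt0_one, pt1_zero, pt1_one, pt2_zero, pt2_one] <;>
    ring

lemma F4_pt2 (lam : ℝ) :
    F4 lam (pt 2) = (1/2 - lam) • pt 0 + lam • pt 1 + (1/2 : ℝ) • pt 2 := by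
  refine E2ext ?_ ?_ <;>
    simp only [add_apply', smul_apply', F4_zero, F4_one,
      pt0_zero, pt0_one, pt1_zero, pt1_one, pt2_zero, pt2_one] <;>
    ring

lemma F4_pt_mem (lam : ℝ) (hl : lam ∈ Set.Icc (0:ℝ) (1/2)) (i : Fin 3) :
    F4 lam (pt i) ∈ Tri := by
  obtain ⟨hl0, hl1⟩ := hl
  fin_cases i
  · show F4 lam (pt 0) ∈ Tri
    rw [F4_pt0]; exact combo_mem (by norm_num) (by linarith) hl0 (by ring)
  · show F4 lam (pt 1) ∈ Tri
    rw [F4_pt1]; exact combo_mem hl0 (by norm_num) (by linarith) (by ring)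
  · show F4 lam (pt 2) ∈ Tri
    rw [F4_pt2]; exact combo_mem (by linarith) hl0 (by norm_num) (by ring)

lemma F4_maps_Tri (lam : ℝ) (hl : lam ∈ Set.Icc (0:ℝ) (1/2)) {x : E2}
    (hx : x ∈ Tri) : F4 lam x ∈ Tri := by
  obtain ⟨a, b, c, ha, hb, hc, habc, hx'⟩ := exists_bary hx
  rw [hx', F4_combo lam a b c habc]
  exact combo_mem' (fun i => F4_pt_mem lam hl i) ha hb hc habc

lemma half_mem (i : Fin 3) {x : E2} (hx : x ∈ Tri) :
    (2⁻¹ : ℝ) • (x + pt i) ∈ Tri := by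
  have h := convex_Tri hx (pt_mem_Tri i) (by norm_num : (0:ℝ) ≤ 2⁻¹)
    (by norm_num : (0:ℝ) ≤ 2⁻¹) (by norm_num)
  simpa [smul_add] using h

lemma Fmap_maps_Tri (lam : ℝ) (hl : lam ∈ Set.Icc (0:ℝ) (1/2)) (i : Fin 4)
    {x : E2} (hx : x ∈ Tri) : Fmap lam i x ∈ Tri := by
  fin_cases i
  · exact half_mem 0 hx
  · exact half_mem 1 hx
  · exact half_mem 2 hx
  · exact F4_maps_Tri lam hl hx
end Aux3

section Aux4
local notation "s3" => Real.sqrt 3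

lemma F4_lip {lam : ℝ} (hl : lam ∈ Set.Icc (0:ℝ) (1/2)) (x y : E2) :
    dist (F4 lam x) (F4 lam y) ≤ (1/2) * dist x y := by
  obtain ⟨hl0, hl1⟩ := hl
  rw [dist_E2, dist_E2, F4_zero, F4_zero, F4_one, F4_one]
  have hc : (1/4 - lam)^2 ≤ 1/16 := by nlinarith
  have hS : (0:ℝ) ≤ (x 0 - y 0)^2 + (x 1 - y 1)^2 := by positivity
  have expand : ((1/4) * x 0 - s3 * (1/4 - lam) * x 1 + (1/2 - lam/2)
        - ((1/4) * y 0 - s3 * (1/4 - lam) * y 1 + (1/2 - lam/2)))^2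
      + (s3 * (1/4 - lam) * x 0 + (1/4) * x 1 + s3 * lam / 2
        - (s3 * (1/4 - lam) * y 0 + (1/4) * y 1 + s3 * lam / 2))^2
      = (1/16 + 3*(1/4 - lam)^2) * ((x 0 - y 0)^2 + (x 1 - y 1)^2) := by
    linear_combination ((1/4 - lam)^2 * ((x 0 - y 0)^2 + (x 1 - y 1)^2)) * hs3
  have h : ((1/4) * x 0 - s3 * (1/4 - lam) * x 1 + (1/2 - lam/2)
        - ((1/4) * y 0 - s3 * (1/4 - lam) * y 1 + (1/2 - lam/2)))^2
      + (s3 * (1/4 - lam) * x 0 + (1/4) * x 1 + s3 * lam / 2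
        - (s3 * (1/4 - lam) * y 0 + (1/4) * y 1 + s3 * lam / 2))^2
      ≤ (1/4) * ((x 0 - y 0)^2 + (x 1 - y 1)^2) := by
    rw [expand]
    nlinarith [mul_le_mul_of_nonneg_right hc hS]
  calc Real.sqrt _ ≤ Real.sqrt ((1/4) * ((x 0 - y 0)^2 + (x 1 - y 1)^2)) :=
        Real.sqrt_le_sqrt h
    _ = (1/2) * Real.sqrt ((x 0 - y 0)^2 + (x 1 - y 1)^2) := by
        rw [show (1/4 : ℝ) = (1/2)^2 by norm_num, Real.sqrt_mul (by positivity),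
          Real.sqrt_sq (by norm_num : (0:ℝ) ≤ 1/2)]

lemma Fmap_lip {lam : ℝ} (hl : lam ∈ Set.Icc (0:ℝ) (1/2)) (i : Fin 4) (x y : E2) :
    dist (Fmap lam i x) (Fmap lam i y) ≤ (1/2) * dist x y := by
  have key : ∀ p : E2, dist ((2⁻¹:ℝ) • (x + p)) ((2⁻¹:ℝ) • (y + p)) = (1/2) * dist x y := by
    intro p
    rw [dist_smul₀, dist_add_right]
    norm_num
  fin_cases i
  · exact le_of_eq (key (pt 0))
  · exact le_of_eq (key (pt 1))
  · exact le_of_eq (key (pt 2))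
  · exact F4_lip hl x y

lemma Tri_ball {x : E2} (hx : x ∈ Tri) :
    (x 0 - 1/2)^2 + (x 1 - s3/6)^2 ≤ 1/3 := by
  set c : E2 := e2 (1/2) (s3/6) with hc
  have hball : Tri ⊆ Metric.closedBall c (s3/3) := by
    apply convexHull_min _ (convex_closedBall c (s3/3))
    intro z hz
    rcases hz with h | h | h <;> subst h <;>
      · rw [Metric.mem_closedBall, dist_E2]
        rw [show Real.sqrt 3 / 3 = Real.sqrt ((s3/3)^2) by
          rw [Real.sqrt_sq (by positivity)]]
        apply Real.sqrt_le_sqrt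
        simp only [pt0_zero, pt0_one, pt1_zero, pt1_one, pt2_zero, pt2_one, e2_zero, e2_one, hc]
        nlinarith [hs3]
  have h := hball hx
  rw [Metric.mem_closedBall, dist_E2] at h
  have h2 : (x 0 - c 0)^2 + (x 1 - c 1)^2 ≤ (s3/3)^2 := by
    have hnn : (0:ℝ) ≤ (x 0 - c 0)^2 + (x 1 - c 1)^2 := by positivity
    nlinarith [Real.sq_sqrt hnn, Real.sqrt_nonneg ((x 0 - c 0)^2 + (x 1 - c 1)^2), hs3']
  have h3 : (s3/3)^2 = 1/3 := by nlinarith [hs3]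
  rw [h3] at h2
  simpa [hc, e2_zero, e2_one] using h2

lemma F4_disp (lam₁ lam₂ : ℝ) {x : E2} (hx : x ∈ Tri) :
    dist (F4 lam₁ x) (F4 lam₂ x) ≤ |lam₁ - lam₂| := by
  have hb := Tri_ball hx
  rw [dist_E2, F4_zero, F4_zero, F4_one, F4_one]
  rw [show |lam₁ - lam₂| = Real.sqrt ((lam₁ - lam₂)^2) from (Real.sqrt_sq_eq_abs _).symm]
  apply Real.sqrt_le_sqrt
  have expand : (1/4 * x 0 - s3 * (1/4 - lam₁) * x 1 + (1/2 - lam₁/2)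
        - (1/4 * x 0 - s3 * (1/4 - lam₂) * x 1 + (1/2 - lam₂/2)))^2
      + (s3 * (1/4 - lam₁) * x 0 + 1/4 * x 1 + s3 * lam₁/2
        - (s3 * (1/4 - lam₂) * x 0 + 1/4 * x 1 + s3 * lam₂/2))^2
      = (lam₁ - lam₂)^2 * 3 * ((x 0 - 1/2)^2 + (x 1 - s3/6)^2) := by
    linear_combination ((lam₁ - lam₂)^2 * (x 1)^2 + (lam₁ - lam₂)^2 * (1/2 - x 0)^2
      - (lam₁ - lam₂)^2 / 12) * hs3
  rw [expand]
  nlinarith [mul_le_mul_of_nonneg_left hb (sq_nonneg (lam₁ - lam₂))]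
end Aux4

section Aux5
local notation "s3" => Real.sqrt 3

lemma Tri_compact : IsCompact Tri :=
  ((Set.finite_singleton (pt 2)).insert (pt 1) |>.insert (pt 0)).isCompact_convexHull ℝ

lemma Tri_nonempty : Tri.Nonempty := ⟨pt 0, pt_mem_Tri 0⟩

lemma AG_subset_Tri {lam : ℝ} (hl : lam ∈ Set.Icc (0:ℝ) (1/2)) {K : Set E2}
    (hK : IsAG lam K) : K ⊆ Tri := by
  obtain ⟨hne, hcomp, heq⟩ := hK
  obtain ⟨x0, hx0K, hx0max'⟩ := hcomp.exists_isMaxOn hne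
    (Metric.continuous_infDist_pt Tri).continuousOn
  have hx0max : ∀ y ∈ K, Metric.infDist y Tri ≤ Metric.infDist x0 Tri :=
    fun y hy => hx0max' hy
  set r := Metric.infDist x0 Tri with hr
  have hx0' : x0 ∈ ⋃ i, Fmap lam i '' K := heq ▸ hx0K
  obtain ⟨i, y, hyK, hxy⟩ := by simpa using hx0'
  obtain ⟨t, htTri, hyt⟩ := Tri_compact.exists_infDist_eq_dist Tri_nonempty y
  have h1 : r ≤ dist x0 (Fmap lam i t) :=
    Metric.infDist_le_dist_of_mem (Fmap_maps_Tri lam hl i htTri)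
  have h2 : dist x0 (Fmap lam i t) ≤ (1/2) * dist y t := by
    rw [← hxy]; exact Fmap_lip hl i y t
  have h4 : Metric.infDist y Tri ≤ r := hx0max y hyK
  have h6 : 0 ≤ r := Metric.infDist_nonneg
  have hr0 : r = 0 := by
    rw [hyt] at h4
    linarith
  intro z hz
  have hz0 : Metric.infDist z Tri = 0 :=
    le_antisymm (le_trans (hx0max z hz) hr0.le) Metric.infDist_nonneg
  exact (Tri_compact.isClosed.mem_iff_infDist_zero Tri_nonempty).2 hz0

lemma Fmap_disp (lam₁ lam₂ : ℝ) (i : Fin 4) {z : E2} (hz : z ∈ Tri) :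
    dist (Fmap lam₁ i z) (Fmap lam₂ i z) ≤ |lam₁ - lam₂| := by
  fin_cases i
  · show dist ((2⁻¹:ℝ) • (z + pt 0)) ((2⁻¹:ℝ) • (z + pt 0)) ≤ _
    simp [dist_self]
  · show dist ((2⁻¹:ℝ) • (z + pt 1)) ((2⁻¹:ℝ) • (z + pt 1)) ≤ _
    simp [dist_self]
  · show dist ((2⁻¹:ℝ) • (z + pt 2)) ((2⁻¹:ℝ) • (z + pt 2)) ≤ _
    simp [dist_self]
  · exact F4_disp lam₁ lam₂ hz

lemma half_step {lamA lamB : ℝ} (hlA : lamA ∈ Set.Icc (0:ℝ) (1/2))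
    (hlB : lamB ∈ Set.Icc (0:ℝ) (1/2)) {KA KB : Set E2}
    (hKA : IsAG lamA KA) (hKB : IsAG lamB KB) {x : E2} (hx : x ∈ KA) :
    ∃ y ∈ KB, dist x y ≤ Metric.hausdorffDist KA KB / 2 + |lamA - lamB| := by
  obtain ⟨hneA, hcA, heqA⟩ := hKA
  obtain ⟨hneB, hcB, heqB⟩ := hKB
  have hfin : EMetric.hausdorffEdist KA KB ≠ ⊤ :=
    Metric.hausdorffEdist_ne_top_of_nonempty_of_bounded hneA hneB hcA.isBounded hcB.isBounded
  have hx' : x ∈ ⋃ i, Fmap lamA i '' KA := heqA ▸ hx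
  obtain ⟨i, u, huK, hxu⟩ := by simpa using hx'
  obtain ⟨v, hvK, huv⟩ := hcB.exists_infDist_eq_dist hneB u
  have hdist : dist u v ≤ Metric.hausdorffDist KA KB := by
    rw [← huv]; exact Metric.infDist_le_hausdorffDist_of_mem huK hfin
  have hvTri : v ∈ Tri := AG_subset_Tri hlB ⟨hneB, hcB, heqB⟩ hvK
  refine ⟨Fmap lamB i v, ?_, ?_⟩
  · have : Fmap lamB i v ∈ ⋃ j, Fmap lamB j '' KB :=
      Set.mem_iUnion.2 ⟨i, Set.mem_image_of_mem _ hvK⟩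
    rwa [← heqB] at this
  · calc dist x (Fmap lamB i v)
        ≤ dist x (Fmap lamA i v) + dist (Fmap lamA i v) (Fmap lamB i v) := dist_triangle _ _ _
      _ ≤ (1/2) * dist u v + |lamA - lamB| := by
          gcongr ?_ + ?_
          · rw [← hxu]; exact Fmap_lip hlA i u v
          · exact Fmap_disp lamA lamB i hvTri
      _ ≤ Metric.hausdorffDist KA KB / 2 + |lamA - lamB| := by linarith

end Aux5


/-- Continuity of the attractor in the parameter: if `K₁, K₂`
are nonempty compact sets with `Kⱼ = ⋃ᵢ F_{i,λⱼ}(Kⱼ)` (so `Kⱼ = AG_{λⱼ}`), then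
the Hausdorff distance satisfies `δ(K₁, K₂) ≤ 2|λ₁ − λ₂|`. -/
theorem stmt10 (lam₁ lam₂ : ℝ)
    (h₁ : lam₁ ∈ Set.Ioo (0:ℝ) (1/2)) (h₂ : lam₂ ∈ Set.Ioo (0:ℝ) (1/2))
    (K₁ K₂ : Set E2) (hK₁ : IsAG lam₁ K₁) (hK₂ : IsAG lam₂ K₂) :
    Metric.hausdorffDist K₁ K₂ ≤ 2 * |lam₁ - lam₂| := by
  have hl₁ : lam₁ ∈ Set.Icc (0:ℝ) (1/2) := ⟨h₁.1.le, h₁.2.le⟩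
  have hl₂ : lam₂ ∈ Set.Icc (0:ℝ) (1/2) := ⟨h₂.1.le, h₂.2.le⟩
  have hd0 : 0 ≤ Metric.hausdorffDist K₁ K₂ := Metric.hausdorffDist_nonneg
  have key : Metric.hausdorffDist K₁ K₂ ≤
      Metric.hausdorffDist K₁ K₂ / 2 + |lam₁ - lam₂| := by
    apply Metric.hausdorffDist_le_of_mem_dist
    · positivity
    · intro x hx
      exact half_step hl₁ hl₂ hK₁ hK₂ hx
    · intro x hx
      obtain ⟨y, hy, hxy⟩ := half_step hl₂ hl₁ hK₂ hK₁ hx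
      refine ⟨y, hy, ?_⟩
      rw [Metric.hausdorffDist_comm, abs_sub_comm] at hxy
      exact hxy
  linarith
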